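/- arXiv:2201.03539 — 3 statements merged into one kernel-verified Lean document; each statement's English description precedes it below -/
import Mathlib

section
/- Let d ≥ 1 and let G be a polynomial in d complex variables such that G(1,…,1) = 0 and, for some δ > 0, G(z) ≠ 0 for every z in the product Δ-domain Δ_δ^d (this holds in particular when a rational function with denominator G is Δ-analytic at (1,…,1) and has a pole there). Then there exists j ∈ {1,…,d} such that the polynomial z_j − 1 divides G in ℂ[z_1,…,z_d]. -/
open MeasureTheory Real Set

noncomputable section

namespace ACSV

/-- The univariate Δ-domain `Δ_δ`. -/
def DeltaDom (δ : ℝ) : Set ℂ :=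
  {z : ℂ | ‖z‖ < 1 + δ ∧ z ≠ 1 ∧ |Complex.arg (1 - z)| < Real.pi / 2 + δ}

/-- The product Δ-domain `Δ_δ^d`. -/
def DeltaDomD (d : ℕ) (δ : ℝ) : Set (Fin d → ℂ) := {z | ∀ j, z j ∈ DeltaDom δ}

/-- The cone `K_δ`. -/
def ConeK (δ : ℝ) : Set ℂ := {u : ℂ | u ≠ 0 ∧ |Complex.arg u| < δ}

/-- The product cone `K_δ^d`. -/
def ConeKD (d : ℕ) (δ : ℝ) : Set (Fin d → ℂ) := {u | ∀ j, u j ∈ ConeK δ}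

/-- `Ω_δ = K_{π/2+δ}`. -/
def OmegaC (δ : ℝ) : Set ℂ := ConeK (Real.pi / 2 + δ)

/-- `Ω_δ^d`. -/
def OmegaCD (d : ℕ) (δ : ℝ) : Set (Fin d → ℂ) := {u | ∀ j, u j ∈ OmegaC δ}

/-- Polynomial type on the product Δ-domain. -/
def PolyTypeDelta (d : ℕ) (δ : ℝ) (A : (Fin d → ℂ) → ℂ) : Prop :=
  ∃ C : ℝ, 0 < C ∧ ∃ M : ℝ, 0 < M ∧ ∀ z ∈ DeltaDomD d δ,
    ‖A z‖ ≤ C * ∑ j, ‖z j - 1‖ ^ (-M)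

/-- (Two-ended) polynomial type on a subset of `ℂ^d`. -/
def PolyTypeCone (d : ℕ) (S : Set (Fin d → ℂ)) (F : (Fin d → ℂ) → ℂ) : Prop :=
  ∃ C : ℝ, 0 < C ∧ ∃ M : ℝ, 0 < M ∧ ∀ u ∈ S,
    ‖F u‖ ≤ C * ∑ j, (‖u j‖ ^ M + ‖u j‖ ^ (-M))

/-- Polynomial type locally at `0` on `Ω_δ^d`. -/
def PolyTypeLocZero (d : ℕ) (δ : ℝ) (H : (Fin d → ℂ) → ℂ) : Prop :=
  ∃ ε : ℝ, 0 < ε ∧ ∃ C : ℝ, 0 < C ∧ ∃ M : ℝ, 0 < M ∧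
    ∀ u ∈ OmegaCD d δ, (∀ j, ‖u j‖ < ε) →
      ‖H u‖ ≤ C * ∑ j, ‖u j‖ ^ (-M)

/-- Demi-analytic at `1 ∈ Δ_δ^d`. -/
def DemiAnalyticAtOne (d : ℕ) (δ : ℝ) (A : (Fin d → ℂ) → ℂ) : Prop :=
  ∃ ε : ℝ, 0 < ε ∧ ∃ As : Fin d → (Fin d → ℂ) → ℂ,
    (∀ z ∈ DeltaDomD d δ, (∀ i, ‖z i - 1‖ < ε) → A z = ∑ j, As j z) ∧
    ∀ j, AnalyticOnNhd ℂ (As j)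
      {z : Fin d → ℂ | (∀ i, ‖z i - 1‖ < ε) ∧ ∀ i, i ≠ j → z i ∈ DeltaDom δ}

/-- Demi-entire on `Ω_δ^d`. -/
def DemiEntireOmega (d : ℕ) (δ : ℝ) (H : (Fin d → ℂ) → ℂ) : Prop :=
  ∃ Hs : Fin d → (Fin d → ℂ) → ℂ,
    (∀ u ∈ OmegaCD d δ, H u = ∑ j, Hs j u) ∧
    ∀ j, AnalyticOnNhd ℂ (Hs j) {u : Fin d → ℂ | ∀ i, i ≠ j → u i ∈ OmegaC δ}

/-- `(θ0, θ)`-homogeneity on a set `S`. -/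
def Homog (d : ℕ) (S : Set (Fin d → ℂ)) (θ0 : ℝ) (θ : Fin d → ℝ)
    (H : (Fin d → ℂ) → ℂ) : Prop :=
  ∀ u ∈ S, ∀ σ : ℝ, 0 < σ →
    H (fun j => ((σ ^ θ j : ℝ) : ℂ) * u j) = ((σ ^ θ0 : ℝ) : ℂ) * H u

/-- The Hankel-type contour `γ_{δ'}`. -/
def hankel (δ' : ℝ) (t : ℝ) : ℂ :=
  if |t| ≤ 1 then Complex.exp (Complex.I * (t : ℂ) * ((Real.pi / 2 + δ' : ℝ) : ℂ))
  else if 1 ≤ t then (t : ℂ) * Complex.exp (Complex.I * ((Real.pi / 2 + δ' : ℝ) : ℂ))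
  else (-t : ℂ) * Complex.exp (-(Complex.I * ((Real.pi / 2 + δ' : ℝ) : ℂ)))

/-- The derivative `γ_{δ'}'`. -/
def hankelDeriv (δ' : ℝ) (t : ℝ) : ℂ :=
  if |t| ≤ 1 then
    Complex.I * ((Real.pi / 2 + δ' : ℝ) : ℂ) *
      Complex.exp (Complex.I * (t : ℂ) * ((Real.pi / 2 + δ' : ℝ) : ℂ))
  else if 1 ≤ t then Complex.exp (Complex.I * ((Real.pi / 2 + δ' : ℝ) : ℂ))
  else -Complex.exp (-(Complex.I * ((Real.pi / 2 + δ' : ℝ) : ℂ)))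

/-- The integrand of the Borel transform along `γ_{δ'}`. -/
def borelIntegrand (d : ℕ) (δ' : ℝ) (H : (Fin d → ℂ) → ℂ) (lam : Fin d → ℂ)
    (t : Fin d → ℝ) : ℂ :=
  H (fun j => hankel δ' (t j)) * Complex.exp (∑ j, lam j * hankel δ' (t j)) *
    ∏ j, hankelDeriv δ' (t j)

/-- The Borel transform `B_{δ'}[H]`. -/
def borel (d : ℕ) (δ' : ℝ) (H : (Fin d → ℂ) → ℂ) (lam : Fin d → ℂ) : ℂ :=
  (1 / (2 * (Real.pi : ℂ) * Complex.I)) ^ d * ∫ t : Fin d → ℝ, borelIntegrand d δ' H lam t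

/-- Univariate Borel integrand. -/
def borelIntegrand1 (δ' : ℝ) (H : ℂ → ℂ) (lam : ℂ) (t : ℝ) : ℂ :=
  H (hankel δ' t) * Complex.exp (lam * hankel δ' t) * hankelDeriv δ' t

/-- Univariate Borel transform. -/
def borel1 (δ' : ℝ) (H : ℂ → ℂ) (lam : ℂ) : ℂ :=
  (1 / (2 * (Real.pi : ℂ) * Complex.I)) * ∫ t : ℝ, borelIntegrand1 δ' H lam t

/-- The truncation domain `[c_1,∞) × ⋯ × [c_d,∞)`. -/
def laplaceDomain (d : ℕ) (c : Fin d → ℝ) : Set (Fin d → ℝ) :=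
  Set.univ.pi fun j => Set.Ici (c j)

/-- The integrand of the truncated Laplace transform. -/
def laplaceIntegrand (d : ℕ) (I : (Fin d → ℂ) → ℂ) (u : Fin d → ℂ)
    (lam : Fin d → ℝ) : ℂ :=
  Complex.exp (-(∑ j, (lam j : ℂ) * u j)) * I fun j => (lam j : ℂ)

/-- The truncated Laplace transform `L_c[I]`. -/
def laplace (d : ℕ) (c : Fin d → ℝ) (I : (Fin d → ℂ) → ℂ) (u : Fin d → ℂ) : ℂ :=
  ∫ lam in laplaceDomain d c, laplaceIntegrand d I u lam

/-- `A` is the sum of the (absolutely convergent) power series with coefficients `a`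
on some polydisc around `0`. -/
def IsPowerSeriesSum (d : ℕ) (a : (Fin d → ℕ) → ℂ) (A : (Fin d → ℂ) → ℂ) : Prop :=
  ∃ r : ℝ, 0 < r ∧ ∀ z : Fin d → ℂ, (∀ j, ‖z j‖ < r) →
    Summable (fun n : Fin d → ℕ => ‖a n‖ * ∏ j, ‖z j‖ ^ n j) ∧
    A z = ∑' n : Fin d → ℕ, a n * ∏ j, z j ^ n j

end ACSV

/-!
Substitute `u = 1 - z` and `p(u) = G(1 - u)`, so that `p(0) = 0` and no `u_j` divides `p`.
A Newton-polygon argument gives positive integer weights `v`, maximal at a coordinate `P`, for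
which the lowest-weight part `φ` of `p` contains two monomials of different degree in `u_P`.
Fixing the other coordinates at suitable positive reals, `φ` acquires a root with `u_P ≠ 0`;
as `φ` is quasi-homogeneous, rotating every coordinate `u_j` by `e^{i θ v_j}` moves this root
into the closed right half-plane in all coordinates. Since `p(s^v u) = s^m (φ(u) + O(s))`, a
Hurwitz-type argument yields, for small `s > 0`, a zero of `p` whose coordinates are small and
have argument less than `π/2 + δ`; then `z = 1 - u` is a zero of `G` in `Δ_δ^d`.
-/

theorem exists_tilted_minimizer {α : Type*} (S : Finset α) (f g : α → ℕ) {μ : α}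
    (hμ : ∀ γ ∈ S, f μ ≤ f γ) (hg : ∃ γ ∈ S, g γ < g μ) :
    ∃ q r : ℕ, 0 < q ∧ ∃ β ∈ S, g β < g μ ∧ q * f β + r * g β = q * f μ + r * g μ ∧
      ∀ γ ∈ S, q * f μ + r * g μ ≤ q * f γ + r * g γ := by
  classical
  -- `β` has the least slope `(f γ - f μ) / (g μ - g γ)` seen from `μ`; `(q, r)` is normal to `μβ`
  obtain ⟨β, hβ, hβmin⟩ := (S.filter (g · < g μ)).exists_min_image
    (fun γ => ((f γ : ℚ) - f μ) / ((g μ : ℚ) - g γ))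
    (by simpa [Finset.filter_nonempty_iff] using hg)
  rw [Finset.mem_filter] at hβ
  refine ⟨g μ - g β, f β - f μ, Nat.sub_pos_of_lt hβ.2, β, hβ.1, hβ.2, ?_, fun γ hγ => ?_⟩
  · rw [← @Nat.cast_inj ℚ]
    push_cast [Nat.cast_sub hβ.2.le, Nat.cast_sub (hμ β hβ.1)]
    ring
  · rw [← @Nat.cast_le ℚ]
    push_cast [Nat.cast_sub hβ.2.le, Nat.cast_sub (hμ β hβ.1)]
    have hfμ : (f μ : ℚ) ≤ f γ := by exact_mod_cast hμ γ hγ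
    have hβμ : (g β : ℚ) < g μ := by exact_mod_cast hβ.2
    have hfβ : (f μ : ℚ) ≤ f β := by exact_mod_cast hμ β hβ.1
    rcases lt_or_ge (g γ) (g μ) with hγμ | hγμ
    · have hγμ' : (g γ : ℚ) < g μ := by exact_mod_cast hγμ
      have := hβmin γ (Finset.mem_filter.2 ⟨hγ, hγμ⟩)
      rw [div_le_div_iff₀ (by linarith) (by linarith)] at this
      nlinarith
    · have hγμ' : (g μ : ℚ) ≤ g γ := by exact_mod_cast hγμ
      nlinarith

theorem exists_weight_two_minimizers {ι : Type*} [Fintype ι] [DecidableEq ι]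
    (S : Finset (ι →₀ ℕ)) (hS : S.Nonempty) (h0 : 0 ∉ S)
    (hcoord : ∀ j, ∃ γ ∈ S, γ j = 0) :
    ∃ (v : ι → ℕ) (P : ι), (∀ j, 0 < v j) ∧ (∀ j, v j ≤ v P) ∧
      ∃ α ∈ S, ∃ β ∈ S, α P ≠ β P ∧ Finsupp.weight v β = Finsupp.weight v α ∧
        ∀ γ ∈ S, Finsupp.weight v α ≤ Finsupp.weight v γ := by
  obtain ⟨μ, hμS, hμ⟩ := S.exists_min_image Finsupp.degree hS
  obtain ⟨j₀, hj₀⟩ : ∃ j₀, μ j₀ ≠ 0 := by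
    by_contra! h
    exact h0 (DFunLike.ext μ 0 h ▸ hμS)
  obtain ⟨γ₀, hγ₀S, hγ₀⟩ := hcoord j₀
  -- tilt the total degree towards `j₀`, where `μ` has a positive exponent but `γ₀` has none
  obtain ⟨q, r, hq, β, hβS, hβ, hβeq, hmin⟩ :=
    exists_tilted_minimizer S Finsupp.degree (· j₀) hμ ⟨γ₀, hγ₀S, by omega⟩
  have hweight : ∀ γ : ι →₀ ℕ, Finsupp.weight (fun j => q + if j = j₀ then r else 0) γ
      = q * γ.degree + r * γ j₀ := by
    intro γ
    simp [Finsupp.weight_eq_sum, Finsupp.degree_eq_sum, add_mul, Finset.sum_add_distrib,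
      Finset.mul_sum, mul_comm]
  refine ⟨fun j => q + if j = j₀ then r else 0, j₀, fun j => by positivity,
    fun j => by by_cases hj : j = j₀ <;> simp [hj], μ, hμS, β, hβS, by omega, ?_, fun γ hγ => ?_⟩
  · rw [hweight, hweight, hβeq]
  · rw [hweight, hweight]
    exact hmin γ hγ

section WeightedEval

open MvPolynomial

variable {ι R : Type*} [Fintype ι] [CommSemiring R]

theorem prod_pow_mul_pow_eq_pow_weight_mul (t : R) (v : ι → ℕ) (x : ι → R) (γ : ι →₀ ℕ) :
    ∏ i, (t ^ v i * x i) ^ γ i = t ^ Finsupp.weight v γ * ∏ i, x i ^ γ i := by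
  simp only [mul_pow, Finset.prod_mul_distrib, ← pow_mul, Finset.prod_pow_eq_pow_sum,
    Finsupp.weight_eq_sum, smul_eq_mul, mul_comm]

theorem MvPolynomial.IsWeightedHomogeneous.eval_pow_mul {v : ι → ℕ} {φ : MvPolynomial ι R}
    {m : ℕ} (hφ : IsWeightedHomogeneous v φ m) (t : R) (x : ι → R) :
    eval (fun i => t ^ v i * x i) φ = t ^ m * eval x φ := by
  simp only [eval_eq', prod_pow_mul_pow_eq_pow_weight_mul, Finset.mul_sum]
  refine Finset.sum_congr rfl fun γ hγ => ?_
  rw [hφ (mem_support_iff.1 hγ)]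
  ring

def weightedRescale (p : MvPolynomial ι R) (v : ι → ℕ) (m : ℕ) (s : R) (x : ι → R) : R :=
  ∑ γ ∈ p.support, coeff γ p * s ^ (Finsupp.weight v γ - m) * ∏ i, x i ^ γ i

variable {p : MvPolynomial ι R} {v : ι → ℕ} {m : ℕ}

theorem eval_pow_mul_eq_pow_mul_weightedRescale
    (hm : ∀ γ ∈ p.support, m ≤ Finsupp.weight v γ) (s : R) (x : ι → R) :
    eval (fun i => s ^ v i * x i) p = s ^ m * weightedRescale p v m s x := by
  simp only [eval_eq', weightedRescale, prod_pow_mul_pow_eq_pow_weight_mul, Finset.mul_sum]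
  refine Finset.sum_congr rfl fun γ hγ => ?_
  rw [← Nat.add_sub_cancel' (hm γ hγ), pow_add, Nat.add_sub_cancel_left]
  ring

theorem weightedRescale_zero (hm : ∀ γ ∈ p.support, m ≤ Finsupp.weight v γ) (x : ι → R) :
    weightedRescale p v m 0 x = eval x (weightedHomogeneousComponent v m p) := by
  classical
  rw [weightedHomogeneousComponent_apply, map_sum, weightedRescale, Finset.sum_filter]
  refine Finset.sum_congr rfl fun γ hγ => ?_
  have := hm γ hγ
  by_cases h : Finsupp.weight v γ = m
  · simp [h, eval_monomial, Finsupp.prod_fintype]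
  · simp [h, zero_pow (Nat.sub_ne_zero_of_lt (lt_of_le_of_ne this (Ne.symm h)))]

end WeightedEval

section CoordLine

open MvPolynomial

variable {ι R : Type*} [Fintype ι] [DecidableEq ι] [CommSemiring R]

def coordLinePoly (φ : MvPolynomial ι R) (P : ι) (c : ι → R) : Polynomial R :=
  ∑ γ ∈ φ.support, Polynomial.C (coeff γ φ * ∏ j, c j ^ γ j) * Polynomial.X ^ γ P

variable (φ : MvPolynomial ι R) (P : ι) (c : ι → R)

theorem eval_coordLinePoly (w : R) :
    (coordLinePoly φ P c).eval w = eval (fun j => c j * if j = P then w else 1) φ := by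
  simp only [coordLinePoly, Polynomial.eval_finsetSum, Polynomial.eval_mul, Polynomial.eval_C,
    Polynomial.eval_pow, Polynomial.eval_X, eval_eq', mul_pow, Finset.prod_mul_distrib,
    ite_pow, one_pow, Finset.prod_ite_eq', Finset.mem_univ, if_true, mul_assoc]

theorem coeff_coordLinePoly (k : ℕ) :
    (coordLinePoly φ P c).coeff k = eval c (weightedHomogeneousComponent (Pi.single P 1) k φ) := by
  rw [weightedHomogeneousComponent_apply, map_sum, coordLinePoly, Polynomial.finsetSum_coeff,
    Finset.sum_filter]
  refine Finset.sum_congr rfl fun γ _ => ?_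
  simp only [Polynomial.coeff_C_mul_X_pow, Finsupp.weight_single_one_apply, eval_monomial,
    Finsupp.prod_fintype _ _ (fun _ => pow_zero _)]
  split_ifs <;> first | rfl | omega

end CoordLine

theorem MvPolynomial.X_dvd_of_forall_mem_support {σ R : Type*} [CommSemiring R]
    {p : MvPolynomial σ R} {j : σ} (h : ∀ γ ∈ p.support, γ j ≠ 0) : X j ∣ p := by
  classical
  rw [← p.support_sum_monomial_coeff]
  exact Finset.dvd_sum fun γ hγ => X_dvd_monomial.2 (Or.inr (h γ hγ))

theorem MvPolynomial.eval_aeval {σ τ R : Type*} [CommSemiring R] (f : σ → MvPolynomial τ R)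
    (u : τ → R) (p : MvPolynomial σ R) :
    eval u (aeval f p) = eval (fun j => eval u (f j)) p :=
  DFunLike.congr_fun (comp_aeval f (aeval u)) p

theorem MvPolynomial.exists_pos_eval_ne_zero {ι : Type*} {q : MvPolynomial ι ℂ} (hq : q ≠ 0) :
    ∃ c : ι → ℝ, (∀ j, 0 < c j) ∧ MvPolynomial.eval (fun j => (c j : ℂ)) q ≠ 0 := by
  by_contra! h
  refine hq (MvPolynomial.funext_set (fun _ => Complex.ofReal '' Set.Ioi 0)
    (fun _ => (Set.Ioi_infinite 0).image Complex.ofReal_injective.injOn) fun x hx => ?_)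
  choose c hc hcx using fun j => hx j (Set.mem_univ j)
  rw [map_zero, ← _root_.funext hcx]
  exact h c hc

theorem Polynomial.exists_ne_zero_isRoot_of_coeff_ne_zero {k : Type*} [Field k] [IsAlgClosed k]
    {f : Polynomial k} {a b : ℕ} (hab : a ≠ b) (ha : f.coeff a ≠ 0) (hb : f.coeff b ≠ 0) :
    ∃ w, w ≠ 0 ∧ f.IsRoot w := by
  by_contra! h
  have hroots : f.roots = Multiset.replicate f.natDegree 0 :=
    Multiset.eq_replicate.2 ⟨IsAlgClosed.card_roots_eq_natDegree, fun r hr =>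
      by_contra fun hr0 => h r hr0 (isRoot_of_mem_roots hr)⟩
  have hf := C_leadingCoeff_mul_prod_multiset_X_sub_C
    (hroots ▸ Multiset.card_replicate _ _ : Multiset.card f.roots = f.natDegree)
  rw [hroots] at hf
  simp only [Multiset.map_replicate, map_zero, sub_zero, Multiset.prod_replicate] at hf
  rw [← hf, coeff_C_mul_X_pow] at ha hb
  split_ifs at ha hb <;> first | exact ha rfl | exact hb rfl | omega

section Hurwitz

open Metric Filter Topology

theorem exists_zero_of_lt_norm_on_sphere {f : ℂ → ℂ} {w₀ : ℂ} {r μ : ℝ}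
    (hf : DiffContOnCl ℂ f (ball w₀ r)) (hr : 0 < r) (hμ : ∀ w ∈ sphere w₀ r, μ ≤ ‖f w‖)
    (hc : ‖f w₀‖ < μ) : ∃ w ∈ closedBall w₀ r, f w = 0 := by
  by_contra! hne
  rw [← closure_ball w₀ hr.ne'] at hne
  -- maximum modulus principle for `1 / f`
  have hμ0 : 0 < μ := (norm_nonneg _).trans_lt hc
  have hbound := Complex.norm_le_of_forall_mem_frontier_norm_le isBounded_ball (hf.inv hne)
    (C := μ⁻¹) (fun z hz => by
      rw [frontier_ball w₀ hr.ne'] at hz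
      rw [Pi.inv_apply, norm_inv]
      exact inv_anti₀ hμ0 (hμ z hz))
    (subset_closure (mem_ball_self hr))
  rw [Pi.inv_apply, norm_inv,
    inv_le_inv₀ (norm_pos_iff.2 (hne _ (subset_closure (mem_ball_self hr)))) hμ0] at hbound
  linarith

theorem eventually_exists_zero_mem_ball {X : Type*} [TopologicalSpace X] {f : X → ℂ → ℂ}
    (hf : Continuous ↿f) (hd : ∀ x, Differentiable ℂ (f x)) {x₀ : X} {w₀ : ℂ}
    (hfin : {w | f x₀ w = 0}.Finite) (h0 : f x₀ w₀ = 0) {ρ : ℝ} (hρ : 0 < ρ) :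
    ∀ᶠ x in 𝓝 x₀, ∃ w ∈ ball w₀ ρ, f x w = 0 := by
  -- a radius `r < ρ` whose circle avoids the finitely many zeros of `f x₀`
  obtain ⟨r, ⟨hr0, hrρ⟩, hr⟩ := ((Set.Ioo_infinite hρ).sdiff (hfin.image (dist · w₀))).nonempty
  have hsph : ∀ w ∈ sphere w₀ r, f x₀ w ≠ 0 := fun w hw h => hr ⟨w, h, hw⟩
  obtain ⟨w₁, hw₁, hmin⟩ := (isCompact_sphere w₀ r).exists_isMinOn
    (NormedSpace.sphere_nonempty.2 hr0.le) (hf.comp (Continuous.prodMk_right x₀)).norm.continuousOn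
  have hmin' : ∀ w ∈ sphere w₀ r, ‖f x₀ w₁‖ ≤ ‖f x₀ w‖ := fun w hw => hmin hw
  have hμ : 0 < ‖f x₀ w₁‖ := norm_pos_iff.2 (hsph w₁ hw₁)
  have hsphere : ∀ᶠ x in 𝓝 x₀, ∀ w ∈ sphere w₀ r, ‖f x₀ w₁‖ / 2 < ‖f x w‖ :=
    (isCompact_sphere w₀ r).eventually_forall_of_forall_eventually fun w hw =>
      hf.norm.continuousAt.eventually_const_lt
        (show ‖f x₀ w₁‖ / 2 < ‖f x₀ w‖ by linarith [hmin' w hw])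
  have hcenter : ∀ᶠ x in 𝓝 x₀, ‖f x w₀‖ < ‖f x₀ w₁‖ / 2 :=
    (hf.comp (Continuous.prodMk_left w₀)).norm.continuousAt.eventually_lt_const
      (show ‖f x₀ w₀‖ < ‖f x₀ w₁‖ / 2 by rw [h0, norm_zero]; exact half_pos hμ)
  filter_upwards [hsphere, hcenter] with x hx hx'
  obtain ⟨w, hw, hfw⟩ :=
    exists_zero_of_lt_norm_on_sphere (hd x).diffContOnCl hr0 (fun w hw => (hx w hw).le) hx'
  exact ⟨w, closedBall_subset_ball hrρ hw, hfw⟩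

end Hurwitz

open Complex in
theorem Complex.re_exp_mul_I_mul_ofReal_nonneg {φ r : ℝ} (hφ : |φ| ≤ π / 2) (hr : 0 ≤ r) :
    0 ≤ (exp (φ * I) * r).re := by
  rw [re_mul_ofReal, exp_ofReal_mul_I_re]
  exact mul_nonneg (Real.cos_nonneg_of_mem_Icc (abs_le.1 hφ)) hr

namespace ACSV

open Filter Topology Complex MvPolynomial

theorem OmegaC_mem_nhds {δ : ℝ} (hδ : 0 < δ) {z : ℂ} (hz : z ≠ 0) (hre : 0 ≤ z.re) :
    OmegaC δ ∈ 𝓝 z := by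
  have hslit : z ∈ slitPlane := by
    rcases hre.lt_or_eq with h | h
    · exact Or.inl h
    · exact Or.inr fun him => hz (Complex.ext h.symm him)
  exact (eventually_ne_nhds hz).and ((continuousAt_arg hslit).abs.eventually_lt_const
    ((abs_arg_le_pi_div_two_iff.2 hre).trans_lt (by linarith)))

theorem ofReal_mul_mem_OmegaC {δ r : ℝ} (hr : 0 < r) {u : ℂ} (hu : u ∈ OmegaC δ) :
    (r : ℂ) * u ∈ OmegaC δ :=
  ⟨mul_ne_zero (ofReal_ne_zero.2 hr.ne') hu.1, by rw [arg_real_mul u hr]; exact hu.2⟩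

theorem one_mem_OmegaC {δ : ℝ} (hδ : 0 < δ) : (1 : ℂ) ∈ OmegaC δ :=
  ⟨one_ne_zero, by rw [arg_one, abs_zero]; positivity⟩

theorem one_sub_mem_DeltaDom {δ : ℝ} {u : ℂ} (hu : u ∈ OmegaC δ) (hlt : ‖u‖ < δ) :
    1 - u ∈ DeltaDom δ :=
  ⟨(norm_sub_le _ _).trans_lt (by rw [norm_one]; linarith), fun h => hu.1 (by simpa using h),
    by simpa using hu.2⟩

section RotatedCoordLine

variable {ι : Type*} [DecidableEq ι]

def rotatedCoordLine (v : ι → ℕ) (P : ι) (c : ι → ℝ) (θ : ℝ) (w : ℂ) : ι → ℂ :=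
  fun j => exp (θ * I) ^ v j * (c j * if j = P then w else 1)

variable (v : ι → ℕ) (P : ι) (c : ι → ℝ)

theorem eval_rotatedCoordLine [Fintype ι] {φ : MvPolynomial ι ℂ} {m : ℕ}
    (hφ : φ.IsWeightedHomogeneous v m) (θ : ℝ) (w : ℂ) :
    MvPolynomial.eval (rotatedCoordLine v P c θ w) φ
      = exp (θ * I) ^ m * (coordLinePoly φ P fun j => (c j : ℂ)).eval w := by
  rw [eval_coordLinePoly, ← hφ.eval_pow_mul]
  rfl

theorem differentiable_rotatedCoordLine (θ : ℝ) :
    Differentiable ℂ (rotatedCoordLine v P c θ) :=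
  differentiable_pi.2 fun j => by
    unfold rotatedCoordLine
    split_ifs <;> fun_prop

theorem eventually_rotatedCoordLine_mem_OmegaC [Fintype ι] {δ : ℝ} (hδ : 0 < δ)
    (hc : ∀ j, 0 < c j) (hvP : ∀ j, v j ≤ v P) (hP : 0 < v P) {w₁ : ℂ} (hw₁ : w₁ ≠ 0) :
    ∀ᶠ w in 𝓝 w₁, ∀ j, rotatedCoordLine v P c (-arg w₁ / (2 * v P)) w j ∈ OmegaC δ := by
  set θ := -arg w₁ / (2 * v P)
  have hvP' : (0 : ℝ) < v P := by exact_mod_cast hP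
  have harg : |arg w₁| ≤ π := abs_arg_le_pi w₁
  refine eventually_all.2 fun j => ?_
  have hcont : Continuous fun w => rotatedCoordLine v P c θ w j :=
    ((continuous_apply j).comp (differentiable_rotatedCoordLine v P c θ).continuous)
  refine hcont.continuousAt.preimage_mem_nhds (OmegaC_mem_nhds hδ ?_ ?_)
  · simp only [rotatedCoordLine]
    split_ifs <;> simp [(hc j).ne', hw₁]
  · by_cases hj : j = P
    · rw [hj]
      -- `w₁ = ‖w₁‖ e^{i arg w₁}`, and the rotation by `v P * θ = -arg w₁ / 2` halves its argument
      have hrot : rotatedCoordLine v P c θ w₁ P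
          = exp ((arg w₁ / 2 : ℝ) * I) * (c P * ‖w₁‖ : ℝ) := by
        conv_lhs => rw [rotatedCoordLine, if_pos rfl, ← norm_mul_exp_arg_mul_I w₁]
        have hθ : (v P : ℂ) * (θ * I) + arg w₁ * I = (arg w₁ / 2 : ℝ) * I := by
          have : (v P : ℂ) ≠ 0 := by exact_mod_cast hP.ne'
          simp only [θ]
          push_cast
          field_simp
          ring
        rw [← Complex.exp_nat_mul, ← hθ, Complex.exp_add]
        push_cast
        ring
      rw [hrot]
      exact re_exp_mul_I_mul_ofReal_nonneg (by rw [abs_div, abs_two]; linarith)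
        (mul_nonneg (hc P).le (norm_nonneg _))
    · have hrot : rotatedCoordLine v P c θ w₁ j = exp ((v j * θ : ℝ) * I) * (c j : ℝ) := by
        simp only [rotatedCoordLine, if_neg hj, mul_one, ← Complex.exp_nat_mul]
        push_cast
        ring_nf
      rw [hrot]
      refine re_exp_mul_I_mul_ofReal_nonneg ?_ (hc j).le
      have hvj : (v j : ℝ) ≤ v P := by exact_mod_cast hvP j
      have key : v j * |arg w₁| ≤ v P * π := mul_le_mul hvj harg (abs_nonneg _) hvP'.le
      rw [abs_mul, Nat.abs_cast, abs_div, abs_neg, abs_mul, abs_two, Nat.abs_cast, ← mul_div_assoc,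
        div_le_iff₀ (by positivity)]
      linarith

end RotatedCoordLine

theorem exists_small_zero_of_weightedHomogeneousComponent {ι : Type*} [Fintype ι] {δ ε : ℝ}
    {p : MvPolynomial ι ℂ} {v : ι → ℕ} (hv : ∀ j, 0 < v j) {m : ℕ}
    (hm : ∀ γ ∈ p.support, m ≤ Finsupp.weight v γ) {y : ℂ → ι → ℂ} (hy : Differentiable ℂ y)
    {w₀ : ℂ} (hΩ : ∀ᶠ w in 𝓝 w₀, ∀ j, y w j ∈ OmegaC δ)
    (hfin : {w | MvPolynomial.eval (y w) (weightedHomogeneousComponent v m p) = 0}.Finite)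
    (h0 : MvPolynomial.eval (y w₀) (weightedHomogeneousComponent v m p) = 0) (hε : 0 < ε) :
    ∃ u : ι → ℂ, (∀ j, u j ∈ OmegaC δ ∧ ‖u j‖ < ε) ∧ MvPolynomial.eval u p = 0 := by
  obtain ⟨ρ, hρ, hball⟩ := Metric.eventually_nhds_iff_ball.1 hΩ
  have hyc : Continuous y := hy.continuous
  have hzeros : ∀ᶠ s : ℝ in 𝓝 0, ∃ w ∈ Metric.ball w₀ ρ, weightedRescale p v m (s : ℂ) (y w) = 0 :=
    eventually_exists_zero_mem_ball (f := fun (s : ℝ) w => weightedRescale p v m (s : ℂ) (y w))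
      (by unfold weightedRescale; fun_prop) (fun s => by unfold weightedRescale; fun_prop)
      (by simpa [weightedRescale_zero hm] using hfin) (by simpa [weightedRescale_zero hm] using h0)
      hρ
  have hsmall : ∀ᶠ s : ℝ in 𝓝 0, ∀ w ∈ Metric.closedBall w₀ ρ, ∀ j, ‖(s : ℂ) ^ v j * y w j‖ < ε :=
    (isCompact_closedBall w₀ ρ).eventually_forall_of_forall_eventually fun w _ =>
      eventually_all.2 fun j => Filter.Tendsto.eventually_lt_const
        (by simpa [(hv j).ne'] using hε) (by fun_prop : Continuous fun z : ℝ × ℂ =>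
          ‖(z.1 : ℂ) ^ v j * y z.2 j‖).continuousAt
  obtain ⟨s, ⟨⟨w, hw, hfw⟩, hsε⟩, hs⟩ :=
    (((hzeros.and hsmall).filter_mono nhdsWithin_le_nhds).and
      (self_mem_nhdsWithin : Set.Ioi (0 : ℝ) ∈ 𝓝[>] 0)).exists
  refine ⟨fun j => (s : ℂ) ^ v j * y w j,
    fun j => ⟨?_, hsε w (Metric.ball_subset_closedBall hw) j⟩, ?_⟩
  · simpa only [Complex.ofReal_pow] using ofReal_mul_mem_OmegaC (pow_pos hs (v j)) (hball w hw j)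
  · rw [eval_pow_mul_eq_pow_mul_weightedRescale hm, hfw, mul_zero]

theorem exists_small_zero_mem_OmegaC {ι : Type*} [Fintype ι] [DecidableEq ι] {δ ε : ℝ}
    (hδ : 0 < δ) (hε : 0 < ε) {p : MvPolynomial ι ℂ} (h0 : eval 0 p = 0)
    (hX : ∀ j, ¬ X j ∣ p) :
    ∃ u : ι → ℂ, (∀ j, u j ∈ OmegaC δ ∧ ‖u j‖ < ε) ∧ eval u p = 0 := by
  rcases eq_or_ne p 0 with rfl | hp
  · refine ⟨fun _ => ((ε / 2 : ℝ) : ℂ), fun _ => ⟨?_, ?_⟩, map_zero _⟩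
    · simpa using ofReal_mul_mem_OmegaC (half_pos hε) (one_mem_OmegaC hδ)
    · rw [norm_real, Real.norm_of_nonneg (half_pos hε).le]
      linarith
  obtain ⟨v, P, hv, hvP, α, hα, β, hβ, hαβ, hβα, hmin⟩ :=
    exists_weight_two_minimizers p.support (support_nonempty.2 hp)
      (by rwa [mem_support_iff, not_not, ← constantCoeff_eq, ← eval_zero])
      fun j => by
        by_contra! h
        exact hX j (X_dvd_of_forall_mem_support h)
  set φ := weightedHomogeneousComponent v (Finsupp.weight v α) p
  have hφ : φ.IsWeightedHomogeneous v (Finsupp.weight v α) :=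
    weightedHomogeneousComponent_isWeightedHomogeneous _ _
  -- the `Pi.single P 1`-weighted components of `φ` are its slices by degree in `X P`
  have hslice : ∀ γ ∈ p.support, Finsupp.weight v γ = Finsupp.weight v α →
      weightedHomogeneousComponent (Pi.single P 1) (γ P) φ ≠ 0 := fun γ hγ hγα h => by
    have := congr_arg (coeff γ) h
    simp [φ, coeff_weightedHomogeneousComponent, Finsupp.weight_single_one_apply, hγα] at this
    exact mem_support_iff.1 hγ this
  obtain ⟨c, hc, hcne⟩ := exists_pos_eval_ne_zero (mul_ne_zero (hslice α hα rfl) (hslice β hβ hβα))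
  rw [map_mul] at hcne
  set g := coordLinePoly φ P fun j => (c j : ℂ)
  have hgα : g.coeff (α P) ≠ 0 := by rw [coeff_coordLinePoly]; exact left_ne_zero_of_mul hcne
  have hgβ : g.coeff (β P) ≠ 0 := by rw [coeff_coordLinePoly]; exact right_ne_zero_of_mul hcne
  obtain ⟨w₁, hw₁, hroot⟩ := Polynomial.exists_ne_zero_isRoot_of_coeff_ne_zero hαβ hgα hgβ
  refine exists_small_zero_of_weightedHomogeneousComponent hv hmin
    (differentiable_rotatedCoordLine v P c _)
    (eventually_rotatedCoordLine_mem_OmegaC v P c hδ hc hvP (hv P) hw₁) ?_ ?_ hε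
  · have hg : g ≠ 0 := fun h => hgα (by rw [h, Polynomial.coeff_zero])
    refine (Polynomial.finite_setOfPred_isRoot hg).subset fun w hw => ?_
    rw [Set.mem_ofPred_eq, eval_rotatedCoordLine v P c hφ] at hw
    exact (mul_eq_zero.1 hw).resolve_left (pow_ne_zero _ (exp_ne_zero _))
  · rw [eval_rotatedCoordLine v P c hφ, hroot.eq_zero, mul_zero]

theorem stmt14_general (d : ℕ) (G : MvPolynomial (Fin d) ℂ)
    (hG1 : MvPolynomial.eval (fun _ => (1 : ℂ)) G = 0)
    (δ : ℝ) (hδ : 0 < δ)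
    (hGne : ∀ z ∈ DeltaDomD d δ, MvPolynomial.eval z G ≠ 0) :
    ∃ j : Fin d, (MvPolynomial.X j - 1 : MvPolynomial (Fin d) ℂ) ∣ G := by
  set σ := aeval (R := ℂ) (fun j => 1 - X j : Fin d → MvPolynomial (Fin d) ℂ)
  have hσσ : σ.comp σ = AlgHom.id ℂ _ := algHom_ext fun j => by simp [σ]
  have heval : ∀ u, eval u (σ G) = eval (fun j => 1 - u j) G := fun u => by
    rw [MvPolynomial.eval_aeval]
    simp
  by_contra! hG
  obtain ⟨u, hu, hzero⟩ := exists_small_zero_mem_OmegaC hδ hδ (p := σ G)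
    (by rw [heval]; simpa using hG1) fun j hj => hG j <| by
      have h := map_dvd σ hj
      rw [← AlgHom.comp_apply, hσσ, AlgHom.id_apply, show σ (X j) = 1 - X j from aeval_X _ _] at h
      rwa [← neg_dvd, neg_sub]
  exact hGne _ (fun j => one_sub_mem_DeltaDom (hu j).1 (hu j).2) (by rwa [← heval])

/-- genuinely multivariate rational functions are never
Δ-analytic. -/
theorem stmt14 (d : ℕ) (hd : 1 ≤ d) (G : MvPolynomial (Fin d) ℂ)
    (hG1 : MvPolynomial.eval (fun _ => (1 : ℂ)) G = 0)
    (δ : ℝ) (hδ : 0 < δ)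
    (hGne : ∀ z ∈ DeltaDomD d δ, MvPolynomial.eval z G ≠ 0) :
    ∃ j : Fin d, (MvPolynomial.X j - 1 : MvPolynomial (Fin d) ℂ) ∣ G :=
  stmt14_general d G hG1 δ hδ hGne

end ACSV
end
end

section
/- Let d ≥ 1, θ0 ∈ ℝ, θ ∈ (0,∞)^d, and let K ⊆ (ℂ∖{0})^d be a set closed under the scalings u ↦ (σ^{θ_1}u_1,…,σ^{θ_d}u_d) for every σ > 0. Let H : K → ℂ be (θ0,θ)-homogeneous and of polynomial type locally at 0, i.e. there exist ε, C, M > 0 with |H(u)| ≤ C·Σ_{j=1}^d |u_j|^{−M} for all u ∈ K with |u_j| < ε for every j. Then there exist a constant C' > 0 and finitely many vectors α^{(1)},…,α^{(N)} ∈ ℝ^d with Σ_{j=1}^d α^{(k)}_j θ_j = θ0 for every k, such that |H(u)| ≤ C'·Σ_{k=1}^N Π_{j=1}^d |u_j|^{α^{(k)}_j} for all u ∈ K. -/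
open MeasureTheory Real Set

noncomputable section

namespace ACSV

/-! Rescale `u ∈ K` by the largest `σ` keeping every `σ^{θ_j} |u_j|` at most `ε / 2`: some
coordinate `i` then sits exactly at `ε / 2`, i.e. `σ = (ε / (2 |u_i|))^{1/θ_i}`. Homogeneity and
the local bound give `|H u| ≤ C ∑_j σ^{-θ0 - M θ_j} |u_j|^{-M}`, and substituting `σ` turns the
`j`-th term into a constant times the monomial `|u_i|^{(θ0 + M θ_j)/θ_i} |u_j|^{-M}`, whose
exponents have `θ`-weight `θ0`. Summing over all pairs `(i, j)` removes the dependence of `i`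
on `u`. -/

section Exponents

variable {ι : Type*} [Fintype ι] [DecidableEq ι]

theorem prod_rpow_single_add_single {r : ι → ℝ} (hr : ∀ l, 0 < r l) (i j : ι) (a b : ℝ) :
    ∏ l, r l ^ (Pi.single i a + Pi.single j b : ι → ℝ) l = r i ^ a * r j ^ b := by
  have single : ∀ (k : ι) (c : ℝ), ∏ l, r l ^ (Pi.single k c : ι → ℝ) l = r k ^ c := fun k c =>
    (Fintype.prod_eq_single k fun l hl => by simp [hl]).trans (by simp)
  simp only [Pi.add_apply, Real.rpow_add (hr _), Finset.prod_mul_distrib, single]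

theorem sum_single_add_single_mul (θ : ι → ℝ) (i j : ι) (a b : ℝ) :
    ∑ l, (Pi.single i a + Pi.single j b : ι → ℝ) l * θ l = a * θ i + b * θ j := by
  simp only [Pi.add_apply, add_mul, Finset.sum_add_distrib, Pi.single_apply, ite_mul, zero_mul,
    Finset.sum_ite_eq', Finset.mem_univ, if_true]

/-- The exponent of `|u_i|^{(θ0 + M θ_j)/θ_i} |u_j|^{-M}`: the term `|u_j|^{-M}` of the local
bound becomes this monomial, times `pairCoeff`, once `u` is rescaled so that `|u_i|` reaches `η`. -/
def pairExponent (θ0 M : ℝ) (θ : ι → ℝ) (p : ι × ι) : ι → ℝ :=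
  Pi.single p.1 ((θ0 + M * θ p.2) / θ p.1) + Pi.single p.2 (-M)

def pairCoeff (η θ0 M : ℝ) (θ : ι → ℝ) (p : ι × ι) : ℝ :=
  η ^ (-((θ0 + M * θ p.2) / θ p.1))

theorem sum_pairExponent_mul {θ : ι → ℝ} (hθ : ∀ j, 0 < θ j) (θ0 M : ℝ) (p : ι × ι) :
    ∑ l, pairExponent θ0 M θ p l * θ l = θ0 := by
  rw [pairExponent, sum_single_add_single_mul, div_mul_cancel₀ _ (hθ p.1).ne']
  ring

end Exponents

theorem sum_fiber_mul_le_sum_mul_sum {α β : Type*} [Fintype α] [Fintype β] {c m : α × β → ℝ}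
    (hc : ∀ p, 0 ≤ c p) (hm : ∀ p, 0 ≤ m p) (a : α) :
    ∑ b, c (a, b) * m (a, b) ≤ (∑ p, c p) * ∑ p, m p := by
  calc ∑ b, c (a, b) * m (a, b)
      ≤ ∑ p, c p * m p := by
        rw [Fintype.sum_prod_type]
        exact Finset.single_le_sum (f := fun a => ∑ b, c (a, b) * m (a, b))
          (fun a _ => Finset.sum_nonneg fun b _ => mul_nonneg (hc _) (hm _)) (Finset.mem_univ a)
    _ ≤ ∑ p, (∑ q, c q) * m p := by
        gcongr with p
        · exact hm p
        · exact Finset.single_le_sum (fun q _ => hc q) (Finset.mem_univ p)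
    _ = (∑ p, c p) * ∑ p, m p := (Finset.mul_sum ..).symm

theorem exists_rpow_inv_rpow_mul_le {ι : Type*} [Finite ι] [Nonempty ι] {r θ : ι → ℝ}
    (hr : ∀ j, 0 < r j) (hθ : ∀ j, 0 < θ j) {η : ℝ} (hη : 0 < η) :
    ∃ i, ∀ j, ((η / r i) ^ (θ i)⁻¹) ^ θ j * r j ≤ η := by
  obtain ⟨i, hi⟩ := Finite.exists_min fun j => (η / r j) ^ (θ j)⁻¹
  refine ⟨i, fun j => ?_⟩
  calc ((η / r i) ^ (θ i)⁻¹) ^ θ j * r j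
      ≤ ((η / r j) ^ (θ j)⁻¹) ^ θ j * r j :=
        mul_le_mul_of_nonneg_right
          (Real.rpow_le_rpow (Real.rpow_nonneg (div_pos hη (hr i)).le _) (hi j) (hθ j).le)
          (hr j).le
    _ = η := by
      rw [← Real.rpow_mul (div_pos hη (hr j)).le, inv_mul_cancel₀ (hθ j).ne', Real.rpow_one,
        div_mul_cancel₀ _ (hr j).ne']

theorem rpow_neg_mul_rpow_mul_rpow_neg {η r s t θ0 M : ℝ} (hη : 0 < η) (hr : 0 < r)
    {x : ℝ} (hx : 0 ≤ x) :
    ((η / r) ^ t⁻¹) ^ (-θ0) * (((η / r) ^ t⁻¹) ^ s * x) ^ (-M) =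
      η ^ (-((θ0 + M * s) / t)) * (r ^ ((θ0 + M * s) / t) * x ^ (-M)) := by
  have hq : 0 < η / r := div_pos hη hr
  rw [Real.mul_rpow (by positivity) hx]
  simp only [← Real.rpow_mul hq.le]
  rw [← mul_assoc, ← Real.rpow_add hq, Real.div_rpow hη.le hr.le, div_eq_mul_inv,
    ← Real.rpow_neg hr.le, mul_assoc]
  congr 3 <;> ring

theorem Homog.norm_apply_rpow_mul {d : ℕ} {K : Set (Fin d → ℂ)} {θ0 : ℝ} {θ : Fin d → ℝ}
    {H : (Fin d → ℂ) → ℂ} (hhom : Homog d K θ0 θ H) {u : Fin d → ℂ} (hu : u ∈ K) {σ : ℝ}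
    (hσ : 0 < σ) : ‖H (fun j => ((σ ^ θ j : ℝ) : ℂ) * u j)‖ = σ ^ θ0 * ‖H u‖ := by
  rw [hhom u hu σ hσ, norm_mul, Complex.norm_real, Real.norm_of_nonneg (by positivity)]

theorem exists_norm_le_sum_pairCoeff_mul {d : ℕ} [Nonempty (Fin d)] {θ0 : ℝ} {θ : Fin d → ℝ}
    (hθ : ∀ j, 0 < θ j) {K : Set (Fin d → ℂ)} (hK0 : ∀ u ∈ K, ∀ j, u j ≠ 0)
    (hKscale : ∀ u ∈ K, ∀ σ : ℝ, 0 < σ → (fun j => ((σ ^ θ j : ℝ) : ℂ) * u j) ∈ K)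
    {H : (Fin d → ℂ) → ℂ} (hhom : Homog d K θ0 θ H) {ε C M : ℝ} (hε : 0 < ε)
    (hloc : ∀ u ∈ K, (∀ j, ‖u j‖ < ε) → ‖H u‖ ≤ C * ∑ j, ‖u j‖ ^ (-M))
    {u : Fin d → ℂ} (hu : u ∈ K) :
    ∃ i, ‖H u‖ ≤ C * ∑ j, pairCoeff (ε / 2) θ0 M θ (i, j) *
      ∏ l, ‖u l‖ ^ pairExponent θ0 M θ (i, j) l := by
  have hr : ∀ j, 0 < ‖u j‖ := fun j => norm_pos_iff.2 (hK0 u hu j)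
  obtain ⟨i, hi⟩ := exists_rpow_inv_rpow_mul_le hr hθ (half_pos hε)
  set σ := (ε / 2 / ‖u i‖) ^ (θ i)⁻¹
  have hσ : 0 < σ := Real.rpow_pos_of_pos (div_pos (half_pos hε) (hr i)) _
  have hnorm : ∀ j, ‖((σ ^ θ j : ℝ) : ℂ) * u j‖ = σ ^ θ j * ‖u j‖ := fun j => by
    rw [norm_mul, Complex.norm_real, Real.norm_of_nonneg (by positivity)]
  have hscaled := hloc _ (hKscale u hu σ hσ) fun j => (hnorm j).trans_lt ((hi j).trans_lt
    (half_lt_self hε))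
  rw [hhom.norm_apply_rpow_mul hu hσ] at hscaled
  refine ⟨i, ?_⟩
  calc ‖H u‖ = σ ^ (-θ0) * (σ ^ θ0 * ‖H u‖) := by
        rw [← mul_assoc, ← Real.rpow_add hσ, neg_add_cancel, Real.rpow_zero, one_mul]
    _ ≤ σ ^ (-θ0) * (C * ∑ j, ‖((σ ^ θ j : ℝ) : ℂ) * u j‖ ^ (-M)) := by gcongr
    _ = _ := by
        simp only [σ, mul_left_comm _ C, Finset.mul_sum, hnorm, pairCoeff, pairExponent,
          prod_rpow_single_add_single hr, rpow_neg_mul_rpow_mul_rpow_neg (half_pos hε) (hr i)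
          (hr _).le]

theorem stmt16_general (d : ℕ) (θ0 : ℝ) (θ : Fin d → ℝ) (hθ : ∀ j, 0 < θ j)
    (K : Set (Fin d → ℂ)) (hK0 : ∀ u ∈ K, ∀ j, u j ≠ 0)
    (hKscale : ∀ u ∈ K, ∀ σ : ℝ, 0 < σ → (fun j => ((σ ^ θ j : ℝ) : ℂ) * u j) ∈ K)
    (H : (Fin d → ℂ) → ℂ) (hhom : Homog d K θ0 θ H)
    (hloc : ∃ ε : ℝ, 0 < ε ∧ ∃ C : ℝ, 0 < C ∧ ∃ M : ℝ, 0 < M ∧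
      ∀ u ∈ K, (∀ j, ‖u j‖ < ε) →
        ‖H u‖ ≤ C * ∑ j, ‖u j‖ ^ (-M)) :
    ∃ C' : ℝ, 0 < C' ∧ ∃ N : ℕ, ∃ α : Fin N → Fin d → ℝ,
      (∀ k, ∑ j, α k j * θ j = θ0) ∧
      ∀ u ∈ K, ‖H u‖ ≤ C' * ∑ k, ∏ j, ‖u j‖ ^ α k j := by
  obtain ⟨ε, hε, C, hC, M, -, hloc⟩ := hloc
  rcases isEmpty_or_nonempty (Fin d) with _ | _
  · exact ⟨1, one_pos, 0, Fin.elim0, fun k => k.elim0,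
      fun u hu => by simpa using hloc u hu isEmptyElim⟩
  have hcoeff : ∀ p, 0 < pairCoeff (ε / 2) θ0 M θ p := fun p =>
    Real.rpow_pos_of_pos (half_pos hε) _
  let e := Fintype.equivFin (Fin d × Fin d)
  refine ⟨C * ∑ p, pairCoeff (ε / 2) θ0 M θ p, mul_pos hC (Finset.sum_pos (fun p _ => hcoeff p)
    Finset.univ_nonempty), Fintype.card (Fin d × Fin d), fun k => pairExponent θ0 M θ (e.symm k),
    fun k => sum_pairExponent_mul hθ θ0 M _, fun u hu => ?_⟩
  obtain ⟨i, hi⟩ := exists_norm_le_sum_pairCoeff_mul hθ hK0 hKscale hhom hε hloc hu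
  rw [Equiv.sum_comp e.symm (fun p => ∏ l, ‖u l‖ ^ pairExponent θ0 M θ p l), mul_assoc]
  refine hi.trans (mul_le_mul_of_nonneg_left ?_ hC.le)
  exact sum_fiber_mul_le_sum_mul_sum (c := pairCoeff (ε / 2) θ0 M θ)
    (m := fun p => ∏ l, ‖u l‖ ^ pairExponent θ0 M θ p l) (fun p => (hcoeff p).le)
    (fun p => Finset.prod_nonneg fun l _ => Real.rpow_nonneg (norm_nonneg _) _) i

/-- a homogeneous function of polynomial type locally at `0` is
bounded by finitely many monomials globally. -/
theorem stmt16 (d : ℕ) (hd : 1 ≤ d) (θ0 : ℝ) (θ : Fin d → ℝ) (hθ : ∀ j, 0 < θ j)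
    (K : Set (Fin d → ℂ)) (hK0 : ∀ u ∈ K, ∀ j, u j ≠ 0)
    (hKscale : ∀ u ∈ K, ∀ σ : ℝ, 0 < σ → (fun j => ((σ ^ θ j : ℝ) : ℂ) * u j) ∈ K)
    (H : (Fin d → ℂ) → ℂ) (hhom : Homog d K θ0 θ H)
    (hloc : ∃ ε : ℝ, 0 < ε ∧ ∃ C : ℝ, 0 < C ∧ ∃ M : ℝ, 0 < M ∧
      ∀ u ∈ K, (∀ j, ‖u j‖ < ε) →
        ‖H u‖ ≤ C * ∑ j, ‖u j‖ ^ (-M)) :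
    ∃ C' : ℝ, 0 < C' ∧ ∃ N : ℕ, ∃ α : Fin N → Fin d → ℝ,
      (∀ k, ∑ j, α k j * θ j = θ0) ∧
      ∀ u ∈ K, ‖H u‖ ≤ C' * ∑ k, ∏ j, ‖u j‖ ^ α k j :=
  stmt16_general d θ0 θ hθ K hK0 hKscale H hhom hloc

end ACSV
end
end

section
/- Let d ≥ 1, δ > 0, and let A be an analytic function on the product Δ-domain Δ_δ^d which is algebraic, i.e. there exists a nonzero polynomial E ∈ ℂ[w, z_1, …, z_d] such that E(A(z), z_1, …, z_d) = 0 for all z ∈ Δ_δ^d. Then for every δ' ∈ (0,δ), A is of polynomial type on Δ_{δ'}^d: there exist C, M > 0 such that |A(z)| ≤ C·Σ_{j=1}^d |z_j − 1|^{−M} for all z ∈ Δ_{δ'}^d. -/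
open MeasureTheory Real Set

noncomputable section

/-!
View `E` as a polynomial in `w` with coefficients in `ℂ[z₁, …, z_d]` and let `p` be its leading
coefficient. Cauchy's bound on polynomial roots makes `p · A` bounded on the bounded set `Δ_δ^d`.
To divide by `p`, choose a direction `v` where the top homogeneous component `p_D` of `p` does not
vanish: along the line `t ↦ z + t v`, `p` is a polynomial of degree `D` in `t` with leading
coefficient `p_D(v)`, independent of `z`. For a polynomial `q` with roots `c` and `h` holomorphic
on a closed disc of radius `ρ`, maximum modulus applied to `h · lc q · ∏ (ρ² - c̄ t)` gives
`|lc q| ρ^(deg q) |h 0| ≤ max_{|t| = ρ} |q h|`. For `z ∈ Δ_{δ'}^d` a disc of radius comparable to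
`min_j |z_j - 1|` around `z` stays inside `Δ_δ^d`, hence `|A z| ≲ (min_j |z_j - 1|)^(-D)`.
-/

open Metric Polynomial ComplexConjugate

section PolynomialFacts

variable {R : Type*} [CommSemiring R]

theorem Polynomial.natDegree_prod_le_sum_of_natDegree_le {ι : Type*} (s : Finset ι)
    (f : ι → R[X]) (n : ι → ℕ) (h : ∀ i ∈ s, (f i).natDegree ≤ n i) :
    (∏ i ∈ s, f i).natDegree ≤ ∑ i ∈ s, n i :=
  (natDegree_prod_le s f).trans (Finset.sum_le_sum h)

theorem Polynomial.coeff_prod_sum_of_natDegree_le {ι : Type*} (s : Finset ι) (f : ι → R[X])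
    (n : ι → ℕ) (h : ∀ i ∈ s, (f i).natDegree ≤ n i) :
    (∏ i ∈ s, f i).coeff (∑ i ∈ s, n i) = ∏ i ∈ s, (f i).coeff (n i) := by
  classical
  induction s using Finset.induction_on with
  | empty => simp
  | insert a s ha ih =>
    simp only [Finset.forall_mem_insert] at h
    rw [Finset.prod_insert ha, Finset.sum_insert ha, Finset.prod_insert ha,
      coeff_mul_add_eq_of_natDegree_le h.1 (natDegree_prod_le_sum_of_natDegree_le s f n h.2),
      ih h.2]

theorem Polynomial.IsRoot.norm_leadingCoeff_mul_le {K : Type*} [NormedDivisionRing K] {p : K[X]}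
    {a : K} (h : p.IsRoot a) :
    ‖p.leadingCoeff * a‖ ≤ ∑ k ∈ Finset.range (p.natDegree + 1), ‖p.coeff k‖ := by
  rcases eq_or_ne p 0 with rfl | hp
  · simp
  have hlc : ‖p.leadingCoeff‖₊ ≠ 0 := by simpa using hp
  have hsup : (Finset.range p.natDegree).sup (‖p.coeff ·‖₊) ≤
      ∑ k ∈ Finset.range p.natDegree, ‖p.coeff k‖₊ :=
    Finset.sup_le fun k hk => Finset.single_le_sum (f := (‖p.coeff ·‖₊)) (by simp) hk
  have key : ‖p.leadingCoeff‖₊ * ‖a‖₊ ≤ ∑ k ∈ Finset.range (p.natDegree + 1), ‖p.coeff k‖₊ :=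
    calc ‖p.leadingCoeff‖₊ * ‖a‖₊ ≤ ‖p.leadingCoeff‖₊ * cauchyBound p := by
          gcongr; exact (h.norm_lt_cauchyBound hp).le
      _ = (Finset.range p.natDegree).sup (‖p.coeff ·‖₊) + ‖p.leadingCoeff‖₊ := by
          rw [cauchyBound, mul_add, mul_div_cancel₀ _ hlc, mul_one]
      _ ≤ _ := by
          rw [Finset.sum_range_succ, coeff_natDegree]
          gcongr
  rw [norm_mul]
  simpa only [← coe_nnnorm, ← NNReal.coe_mul, ← NNReal.coe_sum, NNReal.coe_le_coe] using key

end PolynomialFacts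

namespace MvPolynomial

variable {R σ : Type*}

theorem homogeneousComponent_totalDegree_ne_zero [CommSemiring R] {p : MvPolynomial σ R}
    (hp : p ≠ 0) : homogeneousComponent p.totalDegree p ≠ 0 := by
  obtain ⟨m, hm, hdeg⟩ := Finset.exists_mem_eq_sup p.support (support_nonempty.mpr hp)
    fun m => m.sum fun _ e => e
  intro h
  have := congrArg (coeff m) h
  rw [coeff_homogeneousComponent, if_pos (by rw [totalDegree, hdeg]; rfl), coeff_zero] at this
  exact mem_support_iff.mp hm this

theorem exists_eval_homogeneousComponent_totalDegree_ne_zero [CommRing R] [IsDomain R]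
    [Infinite R] {p : MvPolynomial σ R} (hp : p ≠ 0) :
    ∃ v, eval v (homogeneousComponent p.totalDegree p) ≠ 0 := by
  by_contra! h
  exact homogeneousComponent_totalDegree_ne_zero hp (funext fun v => by simp [h v])

variable [CommSemiring R]

section ProdPow

variable {ℓ : σ → R[X]} (hℓ : ∀ i, (ℓ i).natDegree ≤ 1) (m : σ →₀ ℕ)
include hℓ

theorem natDegree_prod_pow_le_degree : (m.prod fun i k => ℓ i ^ k).natDegree ≤ m.degree := by
  rw [Finsupp.degree_apply]
  exact Polynomial.natDegree_prod_le_sum_of_natDegree_le _ _ _ fun i _ =>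
    (natDegree_pow_le_of_le _ (hℓ i)).trans (by simp)

theorem coeff_degree_prod_pow :
    (m.prod fun i k => ℓ i ^ k).coeff m.degree = m.prod fun i k => (ℓ i).coeff 1 ^ k := by
  rw [Finsupp.degree_apply, Finsupp.prod, Polynomial.coeff_prod_sum_of_natDegree_le]
  · refine Finset.prod_congr rfl fun i _ => ?_
    simpa using coeff_pow_of_natDegree_le (m := m i) (hℓ i)
  · exact fun i _ => (natDegree_pow_le_of_le _ (hℓ i)).trans (by simp)

end ProdPow

def lineRestriction (z v : σ → R) (p : MvPolynomial σ R) : R[X] :=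
  aeval (fun i => Polynomial.C (v i) * Polynomial.X + Polynomial.C (z i)) p

variable (z v : σ → R) (p : MvPolynomial σ R)

theorem eval_lineRestriction (t : R) : (lineRestriction z v p).eval t = eval (z + t • v) p := by
  induction p using MvPolynomial.induction_on with
  | C a => simp [lineRestriction]
  | add p q hp hq => simp_all [lineRestriction]
  | mul_X p i hp =>
    simp only [lineRestriction, map_mul, aeval_X, Polynomial.eval_mul, Polynomial.eval_add,
      Polynomial.eval_C, Polynomial.eval_X] at hp ⊢
    simp only [hp, eval_X, Pi.add_apply, Pi.smul_apply, smul_eq_mul]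
    ring

theorem lineRestriction_eq_sum : lineRestriction z v p =
    ∑ m ∈ p.support, Polynomial.C (coeff m p) *
      m.prod fun i k => (Polynomial.C (v i) * Polynomial.X + Polynomial.C (z i)) ^ k := by
  conv_lhs => rw [lineRestriction, p.as_sum]
  simp only [map_sum, aeval_monomial, Polynomial.algebraMap_eq]

theorem natDegree_lineRestriction_le : (lineRestriction z v p).natDegree ≤ p.totalDegree := by
  rw [lineRestriction_eq_sum]
  refine natDegree_sum_le_of_forall_le _ _ fun m hm => (natDegree_C_mul_le _ _).trans ?_
  exact (natDegree_prod_pow_le_degree (fun _ => natDegree_linear_le) m).trans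
    (le_totalDegree hm)

theorem coeff_lineRestriction_of_totalDegree_le {n : ℕ} (hn : p.totalDegree ≤ n) :
    (lineRestriction z v p).coeff n = eval v (homogeneousComponent n p) := by
  have hℓ : ∀ i, (Polynomial.C (v i) * Polynomial.X + Polynomial.C (z i)).natDegree ≤ 1 :=
    fun _ => natDegree_linear_le
  rw [lineRestriction_eq_sum, finsetSum_coeff, homogeneousComponent_apply, map_sum,
    Finset.sum_filter]
  refine Finset.sum_congr rfl fun m hm => ?_
  rw [Polynomial.coeff_C_mul]
  split_ifs with hmn
  · subst hmn
    rw [coeff_degree_prod_pow hℓ, eval_monomial]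
    simp
  · rw [coeff_eq_zero_of_natDegree_lt, mul_zero]
    exact (natDegree_prod_pow_le_degree hℓ m).trans_lt
      ((le_totalDegree hm).trans hn |>.lt_of_ne hmn)

end MvPolynomial

theorem Complex.abs_arg_lt_iff_mul_cos_lt_re {x : ℂ} (hx : x ≠ 0) {b : ℝ} (hb₀ : 0 ≤ b)
    (hbπ : b ≤ π) : |arg x| < b ↔ ‖x‖ * Real.cos b < x.re := by
  have hre : x.re = ‖x‖ * Real.cos |arg x| := by
    rw [Real.cos_abs, cos_arg hx]; field_simp
  rw [hre, mul_lt_mul_iff_right₀ (norm_pos_iff.mpr hx)]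
  exact (Real.strictAntiOn_cos.lt_iff_gt ⟨hb₀, hbπ⟩ ⟨abs_nonneg _, abs_arg_le_pi x⟩).symm

theorem Complex.exists_abs_arg_lt_of_norm_sub_le {b₁ b₂ : ℝ} (h : b₁ < b₂) :
    ∃ ε > 0, ∀ u u' : ℂ, |arg u| < b₁ → ‖u' - u‖ ≤ ε * ‖u‖ → |arg u'| < b₂ := by
  rcases lt_or_ge π b₂ with hπ | hπ
  · exact ⟨1, one_pos, fun u u' _ _ => (abs_arg_le_pi u').trans_lt hπ⟩
  rcases le_or_gt b₁ 0 with hb₁ | hb₁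
  · exact ⟨1, one_pos, fun u _ hu _ => absurd hu (not_lt.mpr (hb₁.trans (abs_nonneg _)))⟩
  have hcos : Real.cos b₂ < Real.cos b₁ := Real.cos_lt_cos_of_nonneg_of_le_pi hb₁.le hπ h
  refine ⟨(Real.cos b₁ - Real.cos b₂) / 2, by linarith, fun u u' hu hu' => ?_⟩
  rcases eq_or_ne u 0 with rfl | hu0
  · rw [norm_zero, mul_zero, norm_le_zero_iff, sub_zero] at hu'
    simpa [hu'] using hb₁.trans h
  have hre := (abs_arg_lt_iff_mul_cos_lt_re hu0 hb₁.le (h.le.trans hπ)).1 hu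
  have hnorm : |‖u'‖ - ‖u‖| ≤ ‖u' - u‖ := abs_norm_sub_norm_le u' u
  have hre' : |u'.re - u.re| ≤ ‖u' - u‖ := by simpa using abs_re_le_norm (u' - u)
  have hcos₂ : |Real.cos b₂| ≤ 1 := abs_cos_le_one b₂
  have key : ‖u'‖ * Real.cos b₂ < u'.re := by
    have : (‖u'‖ - ‖u‖) * Real.cos b₂ ≤ ‖u' - u‖ :=
      (le_abs_self _).trans (by rw [abs_mul]; nlinarith [abs_nonneg (‖u'‖ - ‖u‖)])
    nlinarith [abs_le.mp hre', norm_nonneg u]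
  have hu'0 : u' ≠ 0 := by rintro rfl; simp at key
  exact (abs_arg_lt_iff_mul_cos_lt_re hu'0 (hb₁.trans h).le hπ).2 key

theorem norm_leadingCoeff_mul_pow_mul_norm_le {h : ℂ → ℂ} {ρ B : ℝ} (hρ : 0 < ρ)
    (hh : DiffContOnCl ℂ h (ball 0 ρ)) (q : ℂ[X])
    (hq : ∀ t ∈ sphere (0 : ℂ) ρ, ‖q.eval t * h t‖ ≤ B) :
    ‖q.leadingCoeff‖ * ρ ^ q.natDegree * ‖h 0‖ ≤ B := by
  have hcard : Multiset.card q.roots = q.natDegree := IsAlgClosed.card_roots_eq_natDegree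
  have hq_eval : ∀ t, q.eval t = q.leadingCoeff * (q.roots.map (t - ·)).prod := fun t => by
    conv_lhs => rw [← C_leadingCoeff_mul_prod_multiset_X_sub_C hcard]
    simp [eval_multiset_prod, Multiset.map_map]
  -- On `|t| = ρ` we have `|ρ² - c̄ t| = ρ |t - c|`, while at `t = 0` the factor is `ρ²`.
  set q' : ℂ[X] := (q.roots.map fun c => C ((ρ : ℂ) ^ 2) - C (conj c) * X).prod
  set g : ℂ → ℂ := fun t => q.leadingCoeff * q'.eval t * h t
  have hg : DiffContOnCl ℂ g (ball 0 ρ) :=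
    ⟨((q'.differentiable.const_mul q.leadingCoeff).differentiableOn).mul hh.1,
      ((q'.continuous.const_mul q.leadingCoeff).continuousOn).mul hh.2⟩
  have hg_sphere : ∀ t ∈ sphere (0 : ℂ) ρ, ‖g t‖ ≤ ρ ^ q.natDegree * B := by
    intro t ht
    have hnorm : ‖t‖ = ρ := by simpa using ht
    have hmirror : ∀ c, (ρ : ℂ) ^ 2 - conj c * t = t * conj (t - c) := fun c => by
      rw [map_sub, mul_sub, Complex.mul_conj, Complex.normSq_eq_norm_sq, hnorm]; push_cast; ring
    have hconj : (q.roots.map fun c => conj (t - c)).prod = conj (q.roots.map (t - ·)).prod := by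
      rw [map_multiset_prod, Multiset.map_map]; rfl
    have : ‖g t‖ = ρ ^ q.natDegree * ‖q.eval t * h t‖ := by
      simp only [g, q', hq_eval, eval_multiset_prod, Multiset.map_map, Function.comp_def, eval_sub,
        eval_C, eval_mul, eval_X, hmirror, Multiset.prod_map_mul, norm_mul, ← hcard]
      rw [Multiset.map_const', Multiset.prod_replicate, norm_pow, hnorm, hconj, Complex.norm_conj]
      ring
    rw [this]
    exact mul_le_mul_of_nonneg_left (hq t ht) (by positivity)
  have h0 := Complex.norm_le_of_forall_mem_frontier_norm_le isBounded_ball hg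
    (by rwa [frontier_ball 0 hρ.ne']) (subset_closure (mem_ball_self hρ))
  have hg0 : g 0 = q.leadingCoeff * ((ρ : ℂ) ^ 2) ^ q.natDegree * h 0 := by
    simp [g, q', eval_multiset_prod, hcard]
  rw [hg0, norm_mul, norm_mul, norm_pow, norm_pow, Complex.norm_real, Real.norm_of_nonneg hρ.le,
    ← pow_mul, mul_comm 2, pow_mul] at h0
  have hρn : 0 < ρ ^ q.natDegree := pow_pos hρ _
  nlinarith

theorem exists_norm_eval_leadingCoeff_mul_le {ι : Type*} [Fintype ι] {S : Set (ι → ℂ)}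
    (hS : Bornology.IsBounded S) (F : (MvPolynomial ι ℂ)[X]) {A : (ι → ℂ) → ℂ}
    (hA : ∀ z ∈ S, (F.map (MvPolynomial.eval z)).IsRoot (A z)) :
    ∃ B, 0 < B ∧ ∀ z ∈ S, ‖MvPolynomial.eval z F.leadingCoeff * A z‖ ≤ B := by
  choose b hb using fun k => hS.isCompact_closure.exists_bound_of_continuousOn
    (MvPolynomial.continuous_eval (F.coeff k)).continuousOn
  refine ⟨1 + ∑ k ∈ Finset.range (F.natDegree + 1), |b k|, by positivity, fun z hz => ?_⟩
  by_cases hlc : MvPolynomial.eval z F.leadingCoeff = 0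
  · rw [hlc, zero_mul, norm_zero]; positivity
  calc ‖MvPolynomial.eval z F.leadingCoeff * A z‖
      ≤ ∑ k ∈ Finset.range (F.natDegree + 1), ‖MvPolynomial.eval z (F.coeff k)‖ := by
        simpa [natDegree_map_of_leadingCoeff_ne_zero _ hlc,
          leadingCoeff_map_of_leadingCoeff_ne_zero _ hlc] using (hA z hz).norm_leadingCoeff_mul_le
    _ ≤ ∑ k ∈ Finset.range (F.natDegree + 1), |b k| :=
        Finset.sum_le_sum fun k _ => (hb k z (subset_closure hz)).trans (le_abs_self _)
    _ ≤ _ := le_add_of_nonneg_left zero_le_one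

theorem exists_ne_zero_norm_eval_mul_le_of_eval_cons_eq_zero {d : ℕ} {S : Set (Fin d → ℂ)}
    (hS : Bornology.IsBounded S) {A : (Fin d → ℂ) → ℂ} {E : MvPolynomial (Fin (d + 1)) ℂ}
    (hE : E ≠ 0) (halg : ∀ z ∈ S, MvPolynomial.eval (Fin.cons (A z) z) E = 0) :
    ∃ p : MvPolynomial (Fin d) ℂ, p ≠ 0 ∧ ∃ B, 0 < B ∧ ∀ z ∈ S, ‖MvPolynomial.eval z p * A z‖ ≤ B :=
  ⟨_, leadingCoeff_ne_zero.mpr ((map_ne_zero_iff _ (AlgEquiv.injective _)).mpr hE),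
    exists_norm_eval_leadingCoeff_mul_le hS _ fun z hz => by
      rw [IsRoot, ← MvPolynomial.eval_eq_eval_mv_eval']; exact halg z hz⟩

theorem norm_eval_homogeneousComponent_mul_pow_mul_norm_le {ι : Type*} [Fintype ι]
    {S : Set (ι → ℂ)} {A : (ι → ℂ) → ℂ} (hA : ∀ y ∈ S, DifferentiableAt ℂ A y)
    {p : MvPolynomial ι ℂ} {B : ℝ} (hB : ∀ y ∈ S, ‖MvPolynomial.eval y p * A y‖ ≤ B)
    {z v : ι → ℂ} {ρ : ℝ} (hρ : 0 < ρ) (hdisc : ∀ t ∈ closedBall (0 : ℂ) ρ, z + t • v ∈ S) :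
    ‖MvPolynomial.eval v (MvPolynomial.homogeneousComponent p.totalDegree p)‖ *
      ρ ^ p.totalDegree * ‖A z‖ ≤ B := by
  set a := MvPolynomial.eval v (MvPolynomial.homogeneousComponent p.totalDegree p)
  set q := MvPolynomial.lineRestriction z v p
  rcases eq_or_ne a 0 with ha | ha
  · simpa [ha] using (norm_nonneg _).trans (hB z (by simpa using hdisc 0 (by simp [hρ.le])))
  have hcoeff : q.coeff p.totalDegree = a :=
    MvPolynomial.coeff_lineRestriction_of_totalDegree_le z v p le_rfl
  have hdeg : q.natDegree = p.totalDegree :=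
    (MvPolynomial.natDegree_lineRestriction_le z v p).antisymm
    (le_natDegree_of_ne_zero (hcoeff ▸ ha))
  have hlc : q.leadingCoeff = a := by rw [leadingCoeff, hdeg, hcoeff]
  have hh : DiffContOnCl ℂ (fun t : ℂ => A (z + t • v)) (ball 0 ρ) := by
    refine DifferentiableOn.diffContOnCl fun t ht => DifferentiableAt.differentiableWithinAt ?_
    rw [closure_ball 0 hρ.ne'] at ht
    exact (hA _ (hdisc t ht)).comp t ((differentiableAt_id.smul_const v).const_add z)
  have := norm_leadingCoeff_mul_pow_mul_norm_le hρ hh q fun t ht => by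
    rw [MvPolynomial.eval_lineRestriction]
    exact hB _ (hdisc t (sphere_subset_closedBall ht))
  simpa [hlc, hdeg] using this

namespace ACSV

theorem exists_mem_deltaDom_of_norm_sub_le {δ δ' : ℝ} (hδ' : 0 < δ') (hδ : δ' < δ) :
    ∃ ε > 0, ∀ z ∈ DeltaDom δ', ∀ w, ‖w - z‖ ≤ ε * ‖z - 1‖ → w ∈ DeltaDom δ := by
  obtain ⟨ε₀, hε₀, harg⟩ :=
    Complex.exists_abs_arg_lt_of_norm_sub_le (show π / 2 + δ' < π / 2 + δ by linarith)
  refine ⟨min (min ε₀ ((δ - δ') / (2 + δ'))) (1 / 2), by positivity, ?_⟩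
  rintro z ⟨hz, hz1, hzarg⟩ w hw
  have hε₀' : ‖w - z‖ ≤ ε₀ * ‖z - 1‖ :=
    hw.trans (by gcongr; exact (min_le_left _ _).trans (min_le_left _ _))
  have hεδ : ‖w - z‖ ≤ (δ - δ') / (2 + δ') * ‖z - 1‖ :=
    hw.trans (by gcongr; exact (min_le_left _ _).trans (min_le_right _ _))
  have hεhalf : ‖w - z‖ ≤ 1 / 2 * ‖z - 1‖ := hw.trans (by gcongr; exact min_le_right _ _)
  have hz1' : 0 < ‖z - 1‖ := norm_pos_iff.mpr (sub_ne_zero.mpr hz1)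
  have hzle : ‖z - 1‖ ≤ 2 + δ' := (norm_sub_le _ _).trans (by simp; linarith)
  refine ⟨?_, ?_, ?_⟩
  · have : (δ - δ') / (2 + δ') * ‖z - 1‖ ≤ δ - δ' := by
      rw [div_mul_eq_mul_div, div_le_iff₀ (by linarith)]; nlinarith
    linarith [norm_le_norm_add_norm_sub' w z]
  · rintro rfl
    rw [norm_sub_rev] at hεhalf
    linarith
  · refine harg _ _ hzarg ?_
    rwa [sub_sub_sub_cancel_left, norm_sub_rev 1 z, norm_sub_rev z w]

theorem exists_add_smul_mem_deltaDomD {d : ℕ} {δ δ' : ℝ} (hδ' : 0 < δ') (hδ : δ' < δ)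
    (v : Fin d → ℂ) :
    ∃ c > 0, ∀ z ∈ DeltaDomD d δ', ∀ μ : ℝ, (∀ j, μ ≤ ‖z j - 1‖) →
      ∀ t ∈ closedBall (0 : ℂ) (c * μ), z + t • v ∈ DeltaDomD d δ := by
  obtain ⟨ε, hε, hdom⟩ := exists_mem_deltaDom_of_norm_sub_le hδ' hδ
  refine ⟨ε / (‖v‖ + 1), by positivity, fun z hz μ hμ t ht j => hdom (z j) (hz j) _ ?_⟩
  rw [mem_closedBall_zero_iff] at ht
  have hcμ : 0 ≤ ε / (‖v‖ + 1) * μ := (norm_nonneg t).trans ht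
  have hvj : ‖v j‖ ≤ ‖v‖ + 1 := (norm_le_pi_norm v j).trans (le_add_of_nonneg_right zero_le_one)
  calc ‖(z + t • v) j - z j‖ = ‖t‖ * ‖v j‖ := by simp
    _ ≤ ε / (‖v‖ + 1) * μ * (‖v‖ + 1) := by gcongr
    _ = ε * μ := by field_simp
    _ ≤ ε * ‖z j - 1‖ := by gcongr; exact hμ j

theorem isBounded_deltaDomD (d : ℕ) (δ : ℝ) : Bornology.IsBounded (DeltaDomD d δ) :=
  isBounded_iff_forall_norm_le.mpr ⟨max (1 + δ) 0, fun _ hz =>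
    (pi_norm_le_iff_of_nonneg (le_max_right _ _)).mpr fun j => (hz j).1.le.trans (le_max_left _ _)⟩

theorem polyTypeDelta_of_norm_le_div_pow {d : ℕ} (hd : 1 ≤ d) {δ' K : ℝ} (hδ' : 0 < δ')
    (hK : 0 < K) (D : ℕ) {A : (Fin d → ℂ) → ℂ}
    (hA : ∀ z ∈ DeltaDomD d δ', ∀ μ > 0, (∀ j, μ ≤ ‖z j - 1‖) → ‖A z‖ ≤ K / μ ^ D) :
    PolyTypeDelta d δ' A := by
  refine ⟨K * (2 + δ'), by positivity, D + 1, by positivity, fun z hz => ?_⟩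
  have : Nonempty (Fin d) := ⟨⟨0, hd⟩⟩
  obtain ⟨j₀, hj₀⟩ := Finite.exists_min fun j => ‖z j - 1‖
  set μ := ‖z j₀ - 1‖
  have hμ : 0 < μ := norm_pos_iff.mpr (sub_ne_zero.mpr (hz j₀).2.1)
  have hμle : μ ≤ 2 + δ' := (norm_sub_le _ _).trans (by simp; linarith [(hz j₀).1])
  have hμM : μ ^ (-((D : ℝ) + 1)) = (μ ^ (D + 1))⁻¹ := by
    rw [Real.rpow_neg hμ.le]; norm_cast
  calc ‖A z‖ ≤ K / μ ^ D := hA z hz μ hμ hj₀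
    _ = K * μ * μ ^ (-((D : ℝ) + 1)) := by rw [hμM]; field_simp; ring
    _ ≤ K * (2 + δ') * μ ^ (-((D : ℝ) + 1)) := by gcongr
    _ ≤ K * (2 + δ') * ∑ j, ‖z j - 1‖ ^ (-((D : ℝ) + 1)) := by
        gcongr
        exact Finset.single_le_sum (f := fun j => ‖z j - 1‖ ^ (-((D : ℝ) + 1)))
          (fun j _ => by positivity) (Finset.mem_univ j₀)

theorem stmt19_general (d : ℕ) (hd : 1 ≤ d) (δ : ℝ)
    (A : (Fin d → ℂ) → ℂ) (hA : AnalyticOnNhd ℂ A (DeltaDomD d δ))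
    (E : MvPolynomial (Fin (d + 1)) ℂ) (hE : E ≠ 0)
    (halg : ∀ z ∈ DeltaDomD d δ, MvPolynomial.eval (Fin.cons (A z) z) E = 0) :
    ∀ δ' ∈ Set.Ioo (0 : ℝ) δ, PolyTypeDelta d δ' A := by
  rintro δ' ⟨hδ'0, hδ'δ⟩
  obtain ⟨p, hp, B, hB0, hB⟩ :=
    exists_ne_zero_norm_eval_mul_le_of_eval_cons_eq_zero (isBounded_deltaDomD d δ) hE halg
  obtain ⟨v, hv⟩ := MvPolynomial.exists_eval_homogeneousComponent_totalDegree_ne_zero hp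
  set a := MvPolynomial.eval v (MvPolynomial.homogeneousComponent p.totalDegree p)
  obtain ⟨c, hc, hdisc⟩ := exists_add_smul_mem_deltaDomD hδ'0 hδ'δ v
  refine polyTypeDelta_of_norm_le_div_pow hd hδ'0 (K := B / ‖a‖ / c ^ p.totalDegree)
    (by positivity) p.totalDegree fun z hz μ hμ hμz => ?_
  have hbound := norm_eval_homogeneousComponent_mul_pow_mul_norm_le
    (fun y hy => (hA y hy).differentiableAt) hB (by positivity) (hdisc z hz μ hμz)
  rw [div_div, div_div, le_div_iff₀ (by positivity)]
  rw [mul_pow] at hbound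
  linarith

/-- algebraic functions analytic on `Δ_δ^d` are of polynomial
type on every `Δ_{δ'}^d` with `δ' < δ`. -/
theorem stmt19 (d : ℕ) (hd : 1 ≤ d) (δ : ℝ) (hδ : 0 < δ)
    (A : (Fin d → ℂ) → ℂ) (hA : AnalyticOnNhd ℂ A (DeltaDomD d δ))
    (E : MvPolynomial (Fin (d + 1)) ℂ) (hE : E ≠ 0)
    (halg : ∀ z ∈ DeltaDomD d δ, MvPolynomial.eval (Fin.cons (A z) z) E = 0) :
    ∀ δ' ∈ Set.Ioo (0 : ℝ) δ, PolyTypeDelta d δ' A :=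
  stmt19_general d hd δ A hA E hE halg

end ACSV
end
end
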